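/- arXiv:1910.01964 — 3 statements merged into one kernel-verified Lean document; each statement's English description precedes it below -/
import Mathlib

section
/- For a strictly positive random variable T with E[T⁻¹|X=x], E[T⁻²|X=x], E[T|X=x] finite and E[T⁻²|X=x] > 0, one has E[T⁻¹|X=x] / E[T⁻²|X=x] ≤ E[T|X=x]. -/
/-!
Since `T⁻¹ = T⁻² · T`, where `t ↦ t⁻²` decreases and `t ↦ t` increases on `(0, ∞)`, Chebyshev's
correlation inequality gives `E[T⁻¹] ≤ E[T⁻²] · E[T]`.
-/

open MeasureTheory

theorem integral_mul_le_integral_mul_integral_of_antivaryOn {Ω : Type*} [MeasurableSpace Ω]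
    {μ : Measure Ω} [IsProbabilityMeasure μ] {f g : Ω → ℝ} {s : Set Ω}
    (hs : ∀ᵐ ω ∂μ, ω ∈ s) (hfg : AntivaryOn f g s)
    (hf : Integrable f μ) (hg : Integrable g μ) (hfg_int : Integrable (f * g) μ) :
    ∫ ω, f ω * g ω ∂μ ≤ (∫ ω, f ω ∂μ) * ∫ ω, g ω ∂μ := by
  -- Integrate the rearrangement inequality for two independent copies of the sample point.
  have hs_fst : ∀ᵐ z ∂μ.prod μ, z.1 ∈ s := Measure.quasiMeasurePreserving_fst.ae hs
  have hs_snd : ∀ᵐ z ∂μ.prod μ, z.2 ∈ s := Measure.quasiMeasurePreserving_snd.ae hs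
  have h_diag_fst : Integrable (fun z : Ω × Ω => f z.1 * g z.1) (μ.prod μ) :=
    hfg_int.comp_fst μ
  have h_diag_snd : Integrable (fun z : Ω × Ω => f z.2 * g z.2) (μ.prod μ) :=
    hfg_int.comp_snd μ
  have h_cross : Integrable (fun z : Ω × Ω => f z.1 * g z.2) (μ.prod μ) := hf.mul_prod hg
  have h_cross' : Integrable (fun z : Ω × Ω => g z.1 * f z.2) (μ.prod μ) := hg.mul_prod hf
  have key : ∫ z, (f z.1 * g z.1 + f z.2 * g z.2) ∂μ.prod μ ≤
      ∫ z, (f z.1 * g z.2 + g z.1 * f z.2) ∂μ.prod μ :=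
    integral_mono_ae (h_diag_fst.add h_diag_snd) (h_cross.add h_cross') <| by
      filter_upwards [hs_fst, hs_snd] with z h1 h2
      linarith [hfg.mul_add_mul_le_mul_add_mul h1 h2, mul_comm (f z.2) (g z.1)]
  rw [integral_add h_diag_fst h_diag_snd, integral_add h_cross h_cross',
    integral_fun_fst (fun ω => f ω * g ω), integral_fun_snd (fun ω => f ω * g ω),
    integral_prod_mul f g, integral_prod_mul g f, probReal_univ, one_smul] at key
  linarith

theorem stmt1_general {Ω : Type*} [MeasurableSpace Ω] (μ : Measure Ω) [IsProbabilityMeasure μ]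
    (T : Ω → ℝ) (hTpos : ∀ᵐ ω ∂μ, 0 < T ω)
    (hT : Integrable T μ)
    (h1 : Integrable (fun ω => (T ω)⁻¹) μ)
    (h2 : Integrable (fun ω => (T ω)⁻¹ ^ 2) μ) :
    (∫ ω, (T ω)⁻¹ ∂μ) / (∫ ω, (T ω)⁻¹ ^ 2 ∂μ) ≤ ∫ ω, T ω ∂μ := by
  have h_inv_eq : (fun ω => (T ω)⁻¹) =ᵐ[μ] fun ω => (T ω)⁻¹ ^ 2 * T ω := by
    filter_upwards [hTpos] with ω hω
    field_simp
  have h_anti : AntivaryOn (fun ω => (T ω)⁻¹ ^ 2) T {ω | 0 < T ω} := fun _ hi _ _ hij =>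
    pow_le_pow_left₀ (inv_nonneg.2 (hi.trans hij).le) (inv_anti₀ hi hij.le) 2
  refine div_le_of_le_mul₀ (integral_nonneg fun ω => sq_nonneg _)
    (integral_nonneg_of_ae (hTpos.mono fun ω hω => hω.le)) ?_
  calc ∫ ω, (T ω)⁻¹ ∂μ = ∫ ω, (T ω)⁻¹ ^ 2 * T ω ∂μ := integral_congr_ae h_inv_eq
    _ ≤ (∫ ω, (T ω)⁻¹ ^ 2 ∂μ) * ∫ ω, T ω ∂μ :=
      integral_mul_le_integral_mul_integral_of_antivaryOn hTpos h_anti h2 hT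
        (h1.congr h_inv_eq)
    _ = (∫ ω, T ω ∂μ) * ∫ ω, (T ω)⁻¹ ^ 2 ∂μ := mul_comm _ _

/-- Park–Stefanski bound: for a strictly positive random variable `T` (under the
conditional law given `X = x`, modeled as a probability measure `μ`),
`E[T⁻¹] / E[T⁻²] ≤ E[T]`. -/
theorem stmt1 {Ω : Type*} [MeasurableSpace Ω] (μ : Measure Ω) [IsProbabilityMeasure μ]
    (T : Ω → ℝ) (hTpos : ∀ᵐ ω ∂μ, 0 < T ω)
    (hT : Integrable T μ)
    (h1 : Integrable (fun ω => (T ω)⁻¹) μ)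
    (h2 : Integrable (fun ω => (T ω)⁻¹ ^ 2) μ)
    (hpos : 0 < ∫ ω, (T ω)⁻¹ ^ 2 ∂μ) :
    (∫ ω, (T ω)⁻¹ ∂μ) / (∫ ω, (T ω)⁻¹ ^ 2 ∂μ) ≤ ∫ ω, T ω ∂μ :=
  stmt1_general μ T hTpos hT h1 h2
end

section
/- Let (Ω, F, P) be a probability space, G, H sub-σ-algebras, and U, V bounded random variables measurable with respect to G and H respectively, with |U| ≤ M₁ and |V| ≤ M₂ a.s. Then |Cov(U, V)| ≤ 4 M₁ M₂ α(G, H), where α(G, H) = sup{|P(A ∩ B) − P(A)P(B)| : A ∈ G, B ∈ H} is the strong mixing coefficient. -/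
/-! With `g = E[V - E V | G]` and `S = {g ≥ 0}`, the pull-out property gives
`Cov(U, V) = E[U g]`, hence `|Cov(U, V)| ≤ M₁ E|g| = M₁ Cov(s_S, V)`, where `s_S = 2·1_S - 1` is
`G`-measurable and `±1`-valued. Running the same argument on `Cov(V, s_S)` with `H` in place of `G`
gives `Cov(s_S, V) ≤ M₂ Cov(s_S, s_T)` for some `T ∈ H`, and
`Cov(s_S, s_T) = 4 (P(S ∩ T) - P(S) P(T)) ≤ 4 α`. -/

open MeasureTheory ProbabilityTheory

section

variable {Ω : Type*} {m m0 : MeasurableSpace Ω} {μ : Measure Ω}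

noncomputable def signIndicator (S : Set Ω) (ω : Ω) : ℝ := 2 * S.indicator 1 ω - 1

lemma abs_signIndicator_le_one (S : Set Ω) (ω : Ω) : |signIndicator S ω| ≤ 1 := by
  by_cases h : ω ∈ S <;> norm_num [signIndicator, h]

lemma signIndicator_mul_eq_abs {f : Ω → ℝ} (ω : Ω) :
    signIndicator {x | 0 ≤ f x} ω * f ω = |f ω| := by
  by_cases h : 0 ≤ f ω
  · simp [signIndicator, h, abs_of_nonneg h]
    norm_num
  · simp [signIndicator, h, abs_of_neg (not_le.mp h)]

lemma measurable_signIndicator {S : Set Ω} (hS : MeasurableSet[m] S) :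
    Measurable[m] (signIndicator S) :=
  ((measurable_const.indicator hS).const_mul 2).sub_const 1

lemma memLp_signIndicator [IsFiniteMeasure μ] {S : Set Ω} (hS : MeasurableSet S)
    (p : ENNReal) : MemLp (signIndicator S) p μ :=
  .of_bound (measurable_signIndicator hS).aestronglyMeasurable 1
    (.of_forall (abs_signIndicator_le_one S))

lemma integral_mul_condExp (hm : m ≤ m0) [SigmaFinite (μ.trim hm)] {f g : Ω → ℝ}
    (hf : Measurable[m] f) (hfg : Integrable (f * g) μ) (hg : Integrable g μ) :
    ∫ ω, f ω * μ[g | m] ω ∂μ = ∫ ω, f ω * g ω ∂μ :=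
  calc ∫ ω, f ω * μ[g | m] ω ∂μ
      = ∫ ω, μ[f * g | m] ω ∂μ :=
        (integral_congr_ae
          (condExp_mul_of_stronglyMeasurable_left hf.stronglyMeasurable hfg hg)).symm
    _ = ∫ ω, f ω * g ω ∂μ := integral_condExp hm

lemma exists_abs_integral_mul_le_integral_signIndicator_mul (hm : m ≤ m0)
    [SigmaFinite (μ.trim hm)] {U W : Ω → ℝ} {M : ℝ} (hU : Measurable[m] U)
    (hUM : ∀ᵐ ω ∂μ, |U ω| ≤ M) (hW : Integrable W μ) :
    ∃ S, MeasurableSet[m] S ∧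
      |∫ ω, U ω * W ω ∂μ| ≤ M * ∫ ω, signIndicator S ω * W ω ∂μ := by
  set g := μ[W | m]
  have hS : MeasurableSet[m] {ω | 0 ≤ g ω} :=
    measurableSet_le measurable_const stronglyMeasurable_condExp.measurable
  refine ⟨_, hS, ?_⟩
  have hs := measurable_signIndicator hS
  have hU_norm : ∀ᵐ ω ∂μ, ‖U ω‖ ≤ M := hUM
  have hs_norm : ∀ᵐ ω ∂μ, ‖signIndicator {ω | 0 ≤ g ω} ω‖ ≤ 1 :=
    .of_forall (abs_signIndicator_le_one _)
  have hUg : Integrable (fun ω => U ω * g ω) μ :=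
    integrable_condExp.bdd_mul (hU.mono hm le_rfl).aestronglyMeasurable hU_norm
  calc |∫ ω, U ω * W ω ∂μ|
      = |∫ ω, U ω * g ω ∂μ| := by
        rw [integral_mul_condExp hm hU
          (hW.bdd_mul (hU.mono hm le_rfl).aestronglyMeasurable hU_norm) hW]
    _ ≤ ∫ ω, |U ω * g ω| ∂μ := abs_integral_le_integral_abs
    _ ≤ ∫ ω, M * |g ω| ∂μ := by
        refine integral_mono_ae hUg.abs (integrable_condExp.abs.const_mul M) ?_
        filter_upwards [hUM] with ω hω
        rw [abs_mul]
        exact mul_le_mul_of_nonneg_right hω (abs_nonneg _)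
    _ = M * ∫ ω, signIndicator {ω | 0 ≤ g ω} ω * g ω ∂μ := by
        simp_rw [integral_const_mul, signIndicator_mul_eq_abs]
    _ = M * ∫ ω, signIndicator {ω | 0 ≤ g ω} ω * W ω ∂μ := by
        rw [integral_mul_condExp hm hs
          (hW.bdd_mul (hs.mono hm le_rfl).aestronglyMeasurable hs_norm) hW]

lemma covariance_eq_integral_mul_sub [IsProbabilityMeasure μ] {X Y : Ω → ℝ}
    (hX : MemLp X 2 μ) (hY : MemLp Y 2 μ) :
    cov[X, Y; μ] = ∫ ω, X ω * (Y ω - μ[Y]) ∂μ := by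
  simp_rw [mul_sub]
  have hXY : Integrable (fun ω => X ω * Y ω) μ := hX.integrable_mul hY
  rw [covariance_eq_sub hX hY, integral_sub hXY ((hX.integrable one_le_two).mul_const _),
    integral_mul_const]
  rfl

lemma exists_abs_covariance_le_covariance_signIndicator [IsProbabilityMeasure μ]
    (hm : m ≤ m0) {U V : Ω → ℝ} {M : ℝ} (hU : Measurable[m] U)
    (hUM : ∀ᵐ ω ∂μ, |U ω| ≤ M) (hV : MemLp V 2 μ) :
    ∃ S, MeasurableSet[m] S ∧ |cov[U, V; μ]| ≤ M * cov[signIndicator S, V; μ] := by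
  obtain ⟨S, hS, hle⟩ := exists_abs_integral_mul_le_integral_signIndicator_mul hm hU hUM
    ((hV.integrable one_le_two).sub (integrable_const μ[V]))
  refine ⟨S, hS, ?_⟩
  have hU2 : MemLp U 2 μ := .of_bound (hU.mono hm le_rfl).aestronglyMeasurable M hUM
  rwa [covariance_eq_integral_mul_sub hU2 hV,
    covariance_eq_integral_mul_sub (memLp_signIndicator (hm _ hS) 2) hV]

lemma covariance_indicator_one [IsProbabilityMeasure μ] {S T : Set Ω}
    (hS : MeasurableSet S) (hT : MeasurableSet T) :
    cov[S.indicator 1, T.indicator 1; μ] = μ.real (S ∩ T) - μ.real S * μ.real T := by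
  have hL2 {A : Set Ω} (hA : MeasurableSet A) : MemLp (A.indicator 1) 2 μ :=
    (memLp_const (1 : ℝ)).indicator hA
  rw [covariance_eq_sub (hL2 hS) (hL2 hT), ← Set.inter_indicator_one,
    integral_indicator_one (hS.inter hT), integral_indicator_one hS, integral_indicator_one hT]

lemma covariance_signIndicator [IsProbabilityMeasure μ] {S T : Set Ω}
    (hS : MeasurableSet S) (hT : MeasurableSet T) :
    cov[signIndicator S, signIndicator T; μ] = 4 * (μ.real (S ∩ T) - μ.real S * μ.real T) := by
  have hint {A : Set Ω} (hA : MeasurableSet A) :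
      Integrable (fun ω => (2 : ℝ) * A.indicator 1 ω) μ :=
    ((integrable_const (1 : ℝ)).indicator hA).const_mul 2
  unfold signIndicator
  simp only [covariance_sub_const_left (hint hS), covariance_sub_const_right (hint hT),
    covariance_const_mul_left, covariance_const_mul_right, covariance_indicator_one hS hT]
  ring

end

/-- Covariance inequality for strong mixing (Davydov/Rio for bounded variables):
if `U`, `V` are bounded and measurable w.r.t. sub-σ-algebras `G`, `H`, then
`|Cov(U,V)| ≤ 4 M₁ M₂ α(G,H)`, where `α` is (an upper bound for) the strong mixing
coefficient `sup{|P(A∩B) − P(A)P(B)| : A ∈ G, B ∈ H}`. -/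
theorem stmt5 {Ω : Type*} [m0 : MeasurableSpace Ω] (μ : Measure Ω) [IsProbabilityMeasure μ]
    (G H : MeasurableSpace Ω) (hG : G ≤ m0) (hH : H ≤ m0)
    (U V : Ω → ℝ) (hUm : Measurable[G] U) (hVm : Measurable[H] V)
    (M₁ M₂ : ℝ) (hM₁ : 0 ≤ M₁) (hM₂ : 0 ≤ M₂)
    (hU : ∀ᵐ ω ∂μ, |U ω| ≤ M₁) (hV : ∀ᵐ ω ∂μ, |V ω| ≤ M₂)
    (α : ℝ)
    (hα : ∀ A B : Set Ω, MeasurableSet[G] A → MeasurableSet[H] B →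
      |(μ (A ∩ B)).toReal - (μ A).toReal * (μ B).toReal| ≤ α) :
    |∫ ω, U ω * V ω ∂μ - (∫ ω, U ω ∂μ) * ∫ ω, V ω ∂μ| ≤ 4 * M₁ * M₂ * α := by
  have hU2 : MemLp U 2 μ := .of_bound (hUm.mono hG le_rfl).aestronglyMeasurable M₁ hU
  have hV2 : MemLp V 2 μ := .of_bound (hVm.mono hH le_rfl).aestronglyMeasurable M₂ hV
  obtain ⟨S, hS, hUS⟩ := exists_abs_covariance_le_covariance_signIndicator hG hUm hU hV2
  obtain ⟨T, hT, hVT⟩ := exists_abs_covariance_le_covariance_signIndicator hH hVm hV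
    (memLp_signIndicator (hG _ hS) 2)
  have hST : cov[signIndicator T, signIndicator S; μ] ≤ 4 * α := by
    rw [covariance_comm, covariance_signIndicator (hG _ hS) (hH _ hT)]
    have hαST : |μ.real (S ∩ T) - μ.real S * μ.real T| ≤ α := hα S T hS hT
    linarith [le_abs_self (μ.real (S ∩ T) - μ.real S * μ.real T)]
  calc |∫ ω, U ω * V ω ∂μ - (∫ ω, U ω ∂μ) * ∫ ω, V ω ∂μ|
      = |cov[U, V; μ]| := by rw [covariance_eq_sub hU2 hV2]; rfl
    _ ≤ M₁ * |cov[V, signIndicator S; μ]| := by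
        rw [covariance_comm V]
        exact hUS.trans (mul_le_mul_of_nonneg_left (le_abs_self _) hM₁)
    _ ≤ M₁ * (M₂ * (4 * α)) := by gcongr; exact hVT.trans (by gcongr)
    _ = 4 * M₁ * M₂ * α := by ring
end

section
/- Let {Tᵢ} and {Cᵢ} be sequences of random variables that are α-mixing with coefficients α₁(n) and α₂(n), and suppose the two sequences are independent of each other. Then the sequence Yᵢ = min(Tᵢ, Cᵢ) is α-mixing with coefficient α(n) ≤ 4 max(α₁(n), α₂(n)). -/
/-!
Put `Yᵢ = min(Tᵢ, Cᵢ)`. An event `A` of the past of `Y` is the preimage under the diagonal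
`ω ↦ (ω, ω)` of a set `S_A ⊆ Ω × Ω` measurable for the product of the pasts of `T` and of `C`, and
likewise for an event `B` of the future. Independence says that the diagonal pushes `μ` forward
to the product of the restrictions of `μ` to `σ(T)` and `σ(C)`, so by Fubini `μ A`, `μ B` and
`μ (A ∩ B)` are the expectations of the measures `f, g, h` of the `ω`-sections of `S_A`, `S_B` and
`S_A ∩ S_B`. These sections lie in the past and future of `C`, so `|h - f g| ≤ α₂` pointwise. The
`[0, 1]`-valued `f` and `g` are measurable for the past and future of `T`, and the layer-cake
formula `f = ∫₀¹ 1{s < f} ds` turns `E[f g] - E[f] E[g]` into an average of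
`μ(f > s, g > t) - μ(f > s) μ(g > t)`, which is at most `α₁`. Hence `α ≤ α₁ + α₂`.
-/

open MeasureTheory ProbabilityTheory

/-- σ-algebra generated by `Z₁, …, Z_k`. -/
def sigmaUpTo {Ω : Type*} (Z : ℕ → Ω → ℝ) (k : ℕ) : MeasurableSpace Ω :=
  ⨆ i ∈ Set.Icc 1 k, MeasurableSpace.comap (Z i) inferInstance

/-- σ-algebra generated by `Z_k, Z_{k+1}, …`. -/
def sigmaFrom {Ω : Type*} (Z : ℕ → Ω → ℝ) (k : ℕ) : MeasurableSpace Ω :=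
  ⨆ i ∈ Set.Ici k, MeasurableSpace.comap (Z i) inferInstance

open scoped ENNReal

section

variable {Ω : Type*}

lemma MeasurableSpace.prod_mono {F₁ F₂ G₁ G₂ : MeasurableSpace Ω} (hF : F₁ ≤ F₂) (hG : G₁ ≤ G₂) :
    F₁.prod G₁ ≤ F₂.prod G₂ :=
  sup_le_sup (comap_mono hF) (comap_mono hG)

lemma MeasurableSpace.comap_diag_prod (F G : MeasurableSpace Ω) :
    (F.prod G).comap (fun ω => (ω, ω)) = F ⊔ G := by
  have h := comap_prodMk (mβ := F) (mγ := G) (id : Ω → Ω) id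
  rw [comap_id, comap_id] at h
  exact h

lemma ENNReal.le_add_ofReal_iff_toReal_le {x y : ℝ≥0∞} {b : ℝ} (hx : x ≠ ∞) (hy : y ≠ ∞)
    (hb : 0 ≤ b) : x ≤ y + ENNReal.ofReal b ↔ x.toReal ≤ y.toReal + b := by
  rw [← ENNReal.toReal_le_toReal hx (ENNReal.add_ne_top.2 ⟨hy, ENNReal.ofReal_ne_top⟩),
    ENNReal.toReal_add hy ENNReal.ofReal_ne_top, ENNReal.toReal_ofReal hb]

section LintegralBound

variable {α : Type*} {m : MeasurableSpace α} {μ : Measure α} [IsProbabilityMeasure μ]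

lemma toReal_lintegral_le_add_of_le {f g : α → ℝ≥0∞} {b : ℝ} (hb : 0 ≤ b)
    (hf1 : ∀ x, f x ≤ 1) (hg1 : ∀ x, g x ≤ 1) (h : ∀ x, (f x).toReal ≤ (g x).toReal + b) :
    (∫⁻ x, f x ∂μ).toReal ≤ (∫⁻ x, g x ∂μ).toReal + b := by
  have hne : ∀ {φ : α → ℝ≥0∞}, (∀ x, φ x ≤ 1) → ∫⁻ x, φ x ∂μ ≠ ∞ := fun hφ =>
    ne_top_of_le_ne_top ENNReal.one_ne_top
      ((lintegral_mono hφ).trans_eq (by rw [lintegral_const, measure_univ, one_mul]))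
  rw [← ENNReal.le_add_ofReal_iff_toReal_le (hne hf1) (hne hg1) hb]
  calc ∫⁻ x, f x ∂μ ≤ ∫⁻ x, g x + ENNReal.ofReal b ∂μ := lintegral_mono fun x =>
        (ENNReal.le_add_ofReal_iff_toReal_le (ne_top_of_le_ne_top ENNReal.one_ne_top (hf1 x))
          (ne_top_of_le_ne_top ENNReal.one_ne_top (hg1 x)) hb).2 (h x)
    _ = ∫⁻ x, g x ∂μ + ENNReal.ofReal b := by
        rw [lintegral_add_right _ measurable_const, lintegral_const, measure_univ, mul_one]

lemma abs_toReal_lintegral_sub_le {f g : α → ℝ≥0∞} {b : ℝ} (hb : 0 ≤ b)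
    (hf1 : ∀ x, f x ≤ 1) (hg1 : ∀ x, g x ≤ 1) (h : ∀ x, |(f x).toReal - (g x).toReal| ≤ b) :
    |(∫⁻ x, f x ∂μ).toReal - (∫⁻ x, g x ∂μ).toReal| ≤ b := by
  simp only [abs_sub_le_iff, sub_le_iff_le_add'] at h ⊢
  exact ⟨toReal_lintegral_le_add_of_le hb hf1 hg1 fun x => (h x).1,
    toReal_lintegral_le_add_of_le hb hg1 hf1 fun x => (h x).2⟩

end LintegralBound

section LayerCake

local notation "Leb₀₁" => volume.restrict (Set.Ioo (0 : ℝ) 1)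

instance isProbabilityMeasure_volume_restrict_Ioo_zero_one : IsProbabilityMeasure Leb₀₁ :=
  ⟨by simp⟩

lemma volume_restrict_Ioo_zero_one_Iio_toReal {z : ℝ≥0∞} (hz : z ≤ 1) :
    Leb₀₁ (Set.Iio z.toReal) = z := by
  have hz' : z.toReal ≤ 1 := ENNReal.toReal_le_of_le_ofReal zero_le_one (by simpa)
  rw [Measure.restrict_apply measurableSet_Iio, Set.Iio_inter_Ioo, min_eq_left hz',
    Real.volume_Ioo, sub_zero, ENNReal.ofReal_toReal (ne_top_of_le_ne_top ENNReal.one_ne_top hz)]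

variable {m0 : MeasurableSpace Ω} {μ : Measure Ω} [SFinite μ]

lemma measurable_measure_lt_toReal {X : Ω → ℝ≥0∞} (hX : Measurable X) :
    Measurable fun s : ℝ => μ {ω | s < (X ω).toReal} :=
  measurable_measure_prodMk_left (measurableSet_lt measurable_fst
    (hX.ennreal_toReal.comp measurable_snd))

lemma lintegral_eq_lintegral_measure_lt {X : Ω → ℝ≥0∞} (hX : Measurable X)
    (hX1 : ∀ ω, X ω ≤ 1) :
    ∫⁻ ω, X ω ∂μ = ∫⁻ s, μ {ω | s < (X ω).toReal} ∂Leb₀₁ := by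
  have hE : MeasurableSet {q : Ω × ℝ | q.2 < (X q.1).toReal} :=
    measurableSet_lt measurable_snd (hX.ennreal_toReal.comp measurable_fst)
  calc ∫⁻ ω, X ω ∂μ
      = ∫⁻ ω, Leb₀₁ (Prod.mk ω ⁻¹' {q | q.2 < (X q.1).toReal}) ∂μ :=
        lintegral_congr fun ω => (volume_restrict_Ioo_zero_one_Iio_toReal (hX1 ω)).symm
    _ = _ := (Measure.prod_apply hE).symm.trans (Measure.prod_apply_symm hE)

lemma lintegral_mul_eq_lintegral_measure_lt_inter {X Y : Ω → ℝ≥0∞} (hX : Measurable X)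
    (hY : Measurable Y) (hX1 : ∀ ω, X ω ≤ 1) (hY1 : ∀ ω, Y ω ≤ 1) :
    ∫⁻ ω, X ω * Y ω ∂μ = ∫⁻ p, μ ({ω | p.1 < (X ω).toReal} ∩ {ω | p.2 < (Y ω).toReal})
      ∂(Leb₀₁).prod Leb₀₁ := by
  have hE : MeasurableSet {q : Ω × ℝ × ℝ | q.2.1 < (X q.1).toReal ∧ q.2.2 < (Y q.1).toReal} :=
    (measurableSet_lt measurable_snd.fst (hX.ennreal_toReal.comp measurable_fst)).inter
      (measurableSet_lt measurable_snd.snd (hY.ennreal_toReal.comp measurable_fst))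
  calc ∫⁻ ω, X ω * Y ω ∂μ
      = ∫⁻ ω, (Leb₀₁).prod Leb₀₁ (Set.Iio (X ω).toReal ×ˢ Set.Iio (Y ω).toReal) ∂μ := by
        refine lintegral_congr fun ω => ?_
        rw [Measure.prod_prod, volume_restrict_Ioo_zero_one_Iio_toReal (hX1 ω),
          volume_restrict_Ioo_zero_one_Iio_toReal (hY1 ω)]
    _ = _ := (Measure.prod_apply hE).symm.trans (Measure.prod_apply_symm hE)

lemma lintegral_mul_lintegral_eq_lintegral_measure_lt_mul {X Y : Ω → ℝ≥0∞}
    (hX : Measurable X) (hY : Measurable Y) (hX1 : ∀ ω, X ω ≤ 1) (hY1 : ∀ ω, Y ω ≤ 1) :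
    (∫⁻ ω, X ω ∂μ) * ∫⁻ ω, Y ω ∂μ
      = ∫⁻ p, μ {ω | p.1 < (X ω).toReal} * μ {ω | p.2 < (Y ω).toReal} ∂(Leb₀₁).prod Leb₀₁ := by
  rw [lintegral_eq_lintegral_measure_lt hX hX1, lintegral_eq_lintegral_measure_lt hY hY1,
    lintegral_prod_mul (measurable_measure_lt_toReal hX).aemeasurable
      (measurable_measure_lt_toReal hY).aemeasurable]

end LayerCake

section DiagonalIndep

variable {F G m0 : MeasurableSpace Ω} {μ : Measure Ω} [IsFiniteMeasure μ]

lemma measurable_measure_prodMk_left_of_le (hG : G ≤ m0) {S : Set (Ω × Ω)}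
    (hS : MeasurableSet[F.prod G] S) : Measurable[F] fun ω => μ (Prod.mk ω ⁻¹' S) := by
  convert @measurable_measure_prodMk_left Ω Ω F G (μ.trim hG) _ S hS using 2 with ω
  exact (trim_measurableSet_eq hG (@measurable_prodMk_left Ω Ω F G ω S hS)).symm

lemma ProbabilityTheory.Indep.map_diag_eq_prod_trim (hF : F ≤ m0) (hG : G ≤ m0)
    (hindep : Indep F G μ) :
    @Measure.map Ω (Ω × Ω) m0 (F.prod G) (fun ω => (ω, ω)) μ
      = @Measure.prod Ω Ω F G (μ.trim hF) (μ.trim hG) := by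
  have hid := (IndepFun_iff_Indep (mβ := F) (mγ := G) id id μ).mpr (by
    simpa only [MeasurableSpace.comap_id] using hindep)
  rw [trim_eq_map hF, trim_eq_map hG]
  exact (indepFun_iff_map_prod_eq_prod_map_map (mβ := F) (mβ' := G)
    (@Measurable.aemeasurable _ _ _ F _ μ (measurable_id'' hF))
    (@Measurable.aemeasurable _ _ _ G _ μ (measurable_id'' hG))).mp hid

lemma ProbabilityTheory.Indep.measure_preimage_diag_eq_lintegral (hF : F ≤ m0) (hG : G ≤ m0)
    (hindep : Indep F G μ) {S : Set (Ω × Ω)} (hS : MeasurableSet[F.prod G] S) :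
    μ ((fun ω => (ω, ω)) ⁻¹' S) = ∫⁻ ω, μ (Prod.mk ω ⁻¹' S) ∂μ := by
  have hdiag : @Measurable Ω (Ω × Ω) m0 (F.prod G) fun ω => (ω, ω) :=
    (measurable_id'' hF).prodMk (measurable_id'' hG)
  rw [← @Measure.map_apply Ω (Ω × Ω) m0 (F.prod G) μ _ hdiag S hS,
    hindep.map_diag_eq_prod_trim hF hG, @Measure.prod_apply Ω Ω F G _ _ _ S hS,
    ← lintegral_trim hF (measurable_measure_prodMk_left_of_le hG hS)]
  exact lintegral_congr fun ω =>
    trim_measurableSet_eq hG (@measurable_prodMk_left Ω Ω F G ω S hS)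

end DiagonalIndep

/-- `α(F, G) ≤ a`, where `α(F, G) = sup |μ(A ∩ B) - μ(A) μ(B)|` over `A ∈ F`, `B ∈ G` is the
α-mixing coefficient between two σ-algebras. -/
def AlphaMixingLE {m0 : MeasurableSpace Ω} (μ : Measure Ω) (F G : MeasurableSpace Ω) (a : ℝ) :
    Prop :=
  ∀ A B : Set Ω, MeasurableSet[F] A → MeasurableSet[G] B →
    |(μ (A ∩ B)).toReal - (μ A).toReal * (μ B).toReal| ≤ a

namespace AlphaMixingLE

variable {F G F' G' F₁ G₁ F₂ G₂ m0 : MeasurableSpace Ω} {μ : Measure Ω} {a b : ℝ}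

lemma nonneg (h : AlphaMixingLE μ F G a) : 0 ≤ a := by
  simpa using h ∅ ∅ (@MeasurableSet.empty Ω F) (@MeasurableSet.empty Ω G)

lemma mono (h : AlphaMixingLE μ F G a) (hF : F' ≤ F) (hG : G' ≤ G) : AlphaMixingLE μ F' G' a :=
  fun A B hA hB => h A B (hF A hA) (hG B hB)

lemma abs_lintegral_mul_sub_le [IsProbabilityMeasure μ] (h : AlphaMixingLE μ F G a)
    (hF : F ≤ m0) (hG : G ≤ m0) {X Y : Ω → ℝ≥0∞} (hX : Measurable[F] X) (hY : Measurable[G] Y)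
    (hX1 : ∀ ω, X ω ≤ 1) (hY1 : ∀ ω, Y ω ≤ 1) :
    |(∫⁻ ω, X ω * Y ω ∂μ).toReal - (∫⁻ ω, X ω ∂μ).toReal * (∫⁻ ω, Y ω ∂μ).toReal| ≤ a := by
  have hX' : Measurable X := hX.mono hF le_rfl
  have hY' : Measurable Y := hY.mono hG le_rfl
  rw [← ENNReal.toReal_mul, lintegral_mul_eq_lintegral_measure_lt_inter hX' hY' hX1 hY1,
    lintegral_mul_lintegral_eq_lintegral_measure_lt_mul hX' hY' hX1 hY1]
  refine abs_toReal_lintegral_sub_le h.nonneg (fun _ => prob_le_one)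
    (fun _ => mul_le_one' prob_le_one prob_le_one) fun p => ?_
  rw [ENNReal.toReal_mul]
  exact h _ _ (measurableSet_lt measurable_const hX.ennreal_toReal)
    (measurableSet_lt measurable_const hY.ennreal_toReal)

lemma sup_of_indep [IsProbabilityMeasure μ] (h₁ : AlphaMixingLE μ F₁ G₁ a)
    (h₂ : AlphaMixingLE μ F₂ G₂ b)
    (hM₁ : F₁ ⊔ G₁ ≤ m0) (hM₂ : F₂ ⊔ G₂ ≤ m0) (hindep : Indep (F₁ ⊔ G₁) (F₂ ⊔ G₂) μ) :
    AlphaMixingLE μ (F₁ ⊔ F₂) (G₁ ⊔ G₂) (a + b) := by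
  intro A B hA hB
  rw [← MeasurableSpace.comap_diag_prod] at hA hB
  obtain ⟨SA, hSA, rfl⟩ := hA
  obtain ⟨SB, hSB, rfl⟩ := hB
  have hSA' : MeasurableSet[(F₁ ⊔ G₁).prod (F₂ ⊔ G₂)] SA :=
    MeasurableSpace.prod_mono le_sup_left le_sup_left _ hSA
  have hSB' : MeasurableSet[(F₁ ⊔ G₁).prod (F₂ ⊔ G₂)] SB :=
    MeasurableSpace.prod_mono le_sup_right le_sup_right _ hSB
  set X := fun ω => μ (Prod.mk ω ⁻¹' SA)
  set Y := fun ω => μ (Prod.mk ω ⁻¹' SB)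
  have hX : Measurable[F₁] X :=
    measurable_measure_prodMk_left_of_le (le_sup_left.trans hM₂) hSA
  have hY : Measurable[G₁] Y :=
    measurable_measure_prodMk_left_of_le (le_sup_right.trans hM₂) hSB
  have hsections : |(∫⁻ ω, μ (Prod.mk ω ⁻¹' (SA ∩ SB)) ∂μ).toReal
      - (∫⁻ ω, X ω * Y ω ∂μ).toReal| ≤ b := by
    refine abs_toReal_lintegral_sub_le h₂.nonneg (fun _ => prob_le_one)
      (fun _ => mul_le_one' prob_le_one prob_le_one) fun ω => ?_
    rw [ENNReal.toReal_mul]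
    exact h₂ _ _ (@measurable_prodMk_left Ω Ω F₁ F₂ ω SA hSA)
      (@measurable_prodMk_left Ω Ω G₁ G₂ ω SB hSB)
  have hcov := h₁.abs_lintegral_mul_sub_le (le_sup_left.trans hM₁) (le_sup_right.trans hM₁)
    hX hY (fun _ => prob_le_one) (fun _ => prob_le_one)
  rw [← Set.preimage_inter, hindep.measure_preimage_diag_eq_lintegral hM₁ hM₂ (hSA'.inter hSB'),
    hindep.measure_preimage_diag_eq_lintegral hM₁ hM₂ hSA',
    hindep.measure_preimage_diag_eq_lintegral hM₁ hM₂ hSB']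
  calc _ ≤ _ := abs_sub_le _ (∫⁻ ω, X ω * Y ω ∂μ).toReal _
    _ ≤ b + a := add_le_add hsections hcov
    _ = a + b := add_comm b a

end AlphaMixingLE

lemma biSup_comap_min_le {ι : Type*} (T C : ι → Ω → ℝ) (s : Set ι) :
    ⨆ i ∈ s, MeasurableSpace.comap (fun ω => min (T i ω) (C i ω)) inferInstance
      ≤ (⨆ i ∈ s, MeasurableSpace.comap (T i) inferInstance)
        ⊔ ⨆ i ∈ s, MeasurableSpace.comap (C i) inferInstance := by
  refine iSup₂_le fun i hi => measurable_iff_comap_le.mp (Measurable.min ?_ ?_)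
  · exact measurable_iff_comap_le.mpr (le_sup_of_le_left
      (le_biSup (fun j => MeasurableSpace.comap (T j) inferInstance) hi))
  · exact measurable_iff_comap_le.mpr (le_sup_of_le_right
      (le_biSup (fun j => MeasurableSpace.comap (C j) inferInstance) hi))

end

/-- Cai (2001), Lemma 2: if `{Tᵢ}` and `{Cᵢ}` are α-mixing with coefficients `α₁(n)`,
`α₂(n)` and mutually independent, then `Yᵢ = min(Tᵢ, Cᵢ)` is α-mixing with coefficient
`α(n) ≤ 4 max(α₁(n), α₂(n))`. -/
theorem stmt13 {Ω : Type*} [m0 : MeasurableSpace Ω] (μ : Measure Ω) [IsProbabilityMeasure μ]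
    (T C : ℕ → Ω → ℝ) (hT : ∀ i, Measurable (T i)) (hC : ∀ i, Measurable (C i))
    (hindep : Indep (⨆ i, MeasurableSpace.comap (T i) inferInstance)
      (⨆ i, MeasurableSpace.comap (C i) inferInstance) μ)
    (α₁ α₂ : ℕ → ℝ)
    (hα₁ : ∀ (n k : ℕ) (A B : Set Ω), MeasurableSet[sigmaUpTo T k] A →
      MeasurableSet[sigmaFrom T (k + n)] B →
      |(μ (A ∩ B)).toReal - (μ A).toReal * (μ B).toReal| ≤ α₁ n)
    (hα₂ : ∀ (n k : ℕ) (A B : Set Ω), MeasurableSet[sigmaUpTo C k] A →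
      MeasurableSet[sigmaFrom C (k + n)] B →
      |(μ (A ∩ B)).toReal - (μ A).toReal * (μ B).toReal| ≤ α₂ n) :
    ∀ (n k : ℕ) (A B : Set Ω),
      MeasurableSet[sigmaUpTo (fun i ω => min (T i ω) (C i ω)) k] A →
      MeasurableSet[sigmaFrom (fun i ω => min (T i ω) (C i ω)) (k + n)] B →
      |(μ (A ∩ B)).toReal - (μ A).toReal * (μ B).toReal| ≤ 4 * max (α₁ n) (α₂ n) := by
  intro n k
  have hsub : ∀ (Z : ℕ → Ω → ℝ) (s t : Set ℕ),
      (⨆ i ∈ s, MeasurableSpace.comap (Z i) inferInstance)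
        ⊔ (⨆ i ∈ t, MeasurableSpace.comap (Z i) inferInstance)
        ≤ ⨆ i, MeasurableSpace.comap (Z i) inferInstance :=
    fun Z s t => sup_le (iSup₂_le_iSup _ _) (iSup₂_le_iSup _ _)
  have hmix : AlphaMixingLE μ (sigmaUpTo T k ⊔ sigmaUpTo C k)
      (sigmaFrom T (k + n) ⊔ sigmaFrom C (k + n)) (α₁ n + α₂ n) :=
    AlphaMixingLE.sup_of_indep (hα₁ n k) (hα₂ n k)
      ((hsub T _ _).trans (iSup_le fun i => (hT i).comap_le))
      ((hsub C _ _).trans (iSup_le fun i => (hC i).comap_le))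
      (indep_of_indep_of_le hindep (hsub T _ _) (hsub C _ _))
  have hα₁0 : 0 ≤ α₁ n := AlphaMixingLE.nonneg (hα₁ n k)
  intro A B hA hB
  calc _ ≤ α₁ n + α₂ n :=
        hmix.mono (biSup_comap_min_le T C _) (biSup_comap_min_le T C _) A B hA hB
    _ ≤ 4 * max (α₁ n) (α₂ n) := by
        linarith [le_max_left (α₁ n) (α₂ n), le_max_right (α₁ n) (α₂ n)]
end
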